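/- Assume ζ_4 ≠ ζ_5. Then the right-hand side integrand of the pentagon equation is a single Gaussian exponential: the six-fold Berezin integral of exp(Φ_{1245} + Φ_{1345} + Φ_{2345}) over b^{(1)}_{1245}, b^{(2)}_{1245}, b^{(1)}_{1345}, b^{(2)}_{1345}, b^{(1)}_{2345}, b^{(2)}_{2345} (in this order, innermost first) equals f_{1245} · f_{1345} · f_{2345}. -/

import Mathlib

/-!  Context: a Grassmann algebra `Λ` over a field `F` of characteristic ≠ 2, with
anticommuting generators indexed by a type `ι` (for us: the (3-element) subsets
`S ⊆ Fin 5`, possibly together with extra generators `b`).  Vertex `k ∈ {1,…,5}`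
of the paper corresponds to `k - 1 : Fin 5`, so `ζ_{ij} = ζ (i-1) - ζ (j-1)`.
The Berezin integral in a generator is axiomatized by the predicate `IsBerezin`. -/

/-- The subalgebra of elements not involving the generator `e i`, i.e. the
subalgebra generated by all the other generators. -/
def notInvolving (F : Type*) [Field F] {Λ : Type*} [Ring Λ] [Algebra F Λ]
    {ι : Type*} (e : ι → Λ) (i : ι) : Subalgebra F Λ :=
  Algebra.adjoin F { x | ∃ j, j ≠ i ∧ x = e j }

/-- `B` is the Berezin integral with respect to the generator `e i`: it is `F`-linear
and, writing `x = g + h * e i` with `g`, `h` not involving `e i` (the generator moved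
to the rightmost position), one has `B x = h`.  Equivalently: `B g = 0` and
`B (h * e i) = h` for `g`, `h` not involving `e i`. -/
def IsBerezin (F : Type*) [Field F] {Λ : Type*} [Ring Λ] [Algebra F Λ]
    {ι : Type*} (e : ι → Λ) (i : ι) (B : Λ →ₗ[F] Λ) : Prop :=
  (∀ g ∈ notInvolving F e i, B g = 0) ∧
  (∀ h ∈ notInvolving F e i, B (h * e i) = h)

/-- The tetrahedron weight `f_{i₁i₂i₃i₄}` (formula (1) of the paper), where
`a S` is the Grassmann generator attached to the unoriented 2-face `S`. -/
def fw {F : Type*} [Field F] {Λ : Type*} [Ring Λ] [Algebra F Λ]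
    (ζ : Fin 5 → F) (a : Finset (Fin 5) → Λ) (i₁ i₂ i₃ i₄ : Fin 5) : Λ :=
  (ζ i₁ - ζ i₂) • (a {i₁, i₂, i₃} * a {i₁, i₂, i₄})
    - (ζ i₁ - ζ i₃) • (a {i₁, i₂, i₃} * a {i₁, i₃, i₄})
    + (ζ i₁ - ζ i₄) • (a {i₁, i₂, i₄} * a {i₁, i₃, i₄})
    + (ζ i₂ - ζ i₃) • (a {i₁, i₂, i₃} * a {i₂, i₃, i₄})
    - (ζ i₂ - ζ i₄) • (a {i₁, i₂, i₄} * a {i₂, i₃, i₄})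
    + (ζ i₃ - ζ i₄) • (a {i₁, i₃, i₄} * a {i₂, i₃, i₄})

/-- The (terminating) Taylor series of the exponential of a nilpotent element:
`exp x = Σ_{n < N} xⁿ/n!`, where `N` is any bound with `x ^ N = 0`. -/
def expT (F : Type*) [Field F] {Λ : Type*} [Ring Λ] [Algebra F Λ] (N : ℕ) (x : Λ) : Λ :=
  ∑ n ∈ Finset.range N, ((n.factorial : F))⁻¹ • x ^ n

/-- The bilinear form `Φ_{i₁i₂i₃i₄}` (formula (6) of the paper):
`Φ = b⁽¹⁾(ζ_{i₂i₃} a_{i₁i₂i₃} − ζ_{i₂i₄} a_{i₁i₂i₄} + ζ_{i₃i₄} a_{i₁i₃i₄})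
   + b⁽²⁾((ζ_{i₁i₃}/ζ_{i₃i₄}) a_{i₁i₂i₃} − (ζ_{i₁i₄}/ζ_{i₃i₄}) a_{i₁i₂i₄} + a_{i₂i₃i₄})`,
where `e (Sum.inl S) = a_S` and `e (Sum.inr b₁)`, `e (Sum.inr b₂)` are the two
extra generators `b⁽¹⁾`, `b⁽²⁾` attached to the tetrahedron. -/
def PhiT {F : Type*} [Field F] {Λ : Type*} [Ring Λ] [Algebra F Λ] {β : Type*}
    (ζ : Fin 5 → F) (e : Finset (Fin 5) ⊕ β → Λ) (b₁ b₂ : β) (i₁ i₂ i₃ i₄ : Fin 5) : Λ :=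
  e (Sum.inr b₁) *
      ((ζ i₂ - ζ i₃) • e (Sum.inl {i₁, i₂, i₃}) - (ζ i₂ - ζ i₄) • e (Sum.inl {i₁, i₂, i₄})
        + (ζ i₃ - ζ i₄) • e (Sum.inl {i₁, i₃, i₄}))
    + e (Sum.inr b₂) *
      (((ζ i₁ - ζ i₃) / (ζ i₃ - ζ i₄)) • e (Sum.inl {i₁, i₂, i₃})
        - ((ζ i₁ - ζ i₄) / (ζ i₃ - ζ i₄)) • e (Sum.inl {i₁, i₂, i₄})
        + e (Sum.inl {i₂, i₃, i₄}))

/-! Each `Φ_T` is `b⁽¹⁾ u + b⁽²⁾ v` with `u`, `v` linear in the face generators, so the six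
summands of `Φ₁₂₄₅ + Φ₁₃₄₅ + Φ₂₃₄₅` are products of two odd elements: they commute pairwise and
square to zero, and the exponential factorizes as `∏ (1 + b u)`. Integrating
`P (1 + b⁽¹⁾ u) (1 + b⁽²⁾ v) Q` over `b⁽¹⁾` and then `b⁽²⁾`, with `Q` even, leaves `P u v Q`,
and `u v = f_T` by the three-term identity `ζ₁₃ ζ₂₄ - ζ₁₄ ζ₂₃ = ζ₁₂ ζ₃₄`. -/

section GrassmannSpan

open Submodule

variable {F : Type*} [Field F] {Λ : Type*} [Ring Λ] [Algebra F Λ] {ι : Type*} {e : ι → Λ}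

theorem mul_eq_neg_mul_of_mem_span (hanti : ∀ i j, e i * e j = -(e j * e i)) {x y : Λ}
    (hx : x ∈ span F (Set.range e)) (hy : y ∈ span F (Set.range e)) : x * y = -(y * x) := by
  induction hx, hy using span_induction₂ with
  | mem_mem a b ha hb =>
    obtain ⟨i, rfl⟩ := ha
    obtain ⟨j, rfl⟩ := hb
    exact hanti i j
  | zero_left => simp
  | zero_right => simp
  | add_left _ _ _ _ _ _ h₁ h₂ => simp only [add_mul, mul_add, h₁, h₂, neg_add]
  | add_right _ _ _ _ _ _ h₁ h₂ => simp only [add_mul, mul_add, h₁, h₂, neg_add]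
  | smul_left _ _ _ _ _ h => simp only [smul_mul_assoc, mul_smul_comm, h, smul_neg]
  | smul_right _ _ _ _ _ h => simp only [smul_mul_assoc, mul_smul_comm, h, smul_neg]

theorem mul_self_eq_zero_of_mem_span (hanti : ∀ i j, e i * e j = -(e j * e i))
    (hsq : ∀ i, e i * e i = 0) {x : Λ} (hx : x ∈ span F (Set.range e)) : x * x = 0 := by
  induction hx using span_induction with
  | mem _ h =>
    obtain ⟨i, rfl⟩ := h
    exact hsq i
  | zero => simp
  | add x y hx hy h₁ h₂ =>
    rw [add_mul, mul_add, mul_add, h₁, h₂, mul_eq_neg_mul_of_mem_span hanti hx hy]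
    abel
  | smul _ _ _ h => rw [smul_mul_smul_comm, h, smul_zero]

theorem commute_mul_of_mem_span (hanti : ∀ i j, e i * e j = -(e j * e i)) {x y z : Λ}
    (hx : x ∈ span F (Set.range e)) (hy : y ∈ span F (Set.range e))
    (hz : z ∈ span F (Set.range e)) : Commute x (y * z) := by
  rw [Commute, SemiconjBy, ← mul_assoc, mul_eq_neg_mul_of_mem_span hanti hx hy, neg_mul,
    mul_assoc, mul_eq_neg_mul_of_mem_span hanti hx hz, mul_neg, neg_neg, mul_assoc]

theorem mul_mul_self_eq_zero_of_mem_span (hanti : ∀ i j, e i * e j = -(e j * e i))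
    (hsq : ∀ i, e i * e i = 0) {x y : Λ} (hx : x ∈ span F (Set.range e))
    (hy : y ∈ span F (Set.range e)) : x * y * (x * y) = 0 := by
  rw [mul_assoc, ← mul_assoc y, mul_eq_neg_mul_of_mem_span hanti hy hx, neg_mul, mul_neg,
    mul_assoc, mul_self_eq_zero_of_mem_span hanti hsq hy, mul_zero, mul_zero, neg_zero]

end GrassmannSpan

section TruncatedExp

open Finset

variable {F : Type*} [Field F] {Λ : Type*} [Ring Λ] [Algebra F Λ]

theorem add_pow_succ_of_mul_self_eq_zero {x y : Λ} (hc : Commute x y) (hx : x * x = 0) (n : ℕ) :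
    (x + y) ^ (n + 1) = y ^ (n + 1) + (n + 1) • (x * y ^ n) := by
  induction n with
  | zero => simp [add_comm]
  | succ n ih =>
    have hxy : x * (y ^ n * x) = 0 := by
      rw [← (hc.pow_right n).eq, ← mul_assoc, hx, zero_mul]
    rw [pow_succ, ih]
    simp only [add_mul, mul_add, smul_mul_assoc, mul_assoc, hxy, smul_zero, add_zero,
      ← pow_succ, ← (hc.pow_right (n + 1)).eq]
    rw [add_left_comm, succ_nsmul' _ (n + 1)]

theorem list_sum_pow_length_succ_eq_zero {l : List Λ} (hl : l.Pairwise Commute)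
    (hsq : ∀ x ∈ l, x * x = 0) : l.sum ^ (l.length + 1) = 0 := by
  induction l with
  | nil => simp
  | cons x l ih =>
    rw [List.pairwise_cons] at hl
    rw [List.forall_mem_cons] at hsq
    rw [List.sum_cons, List.length_cons]
    exact (Commute.list_sum_right x l hl.1).add_pow_eq_zero_of_add_le_succ_of_pow_eq_zero
      (by rw [pow_two, hsq.1]) (ih hl.2 hsq.2) (by omega)

theorem expT_zero {N : ℕ} (hN : 0 < N) : expT F N (0 : Λ) = 1 := by
  obtain ⟨M, rfl⟩ := Nat.exists_eq_add_of_lt hN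
  simp [expT, sum_range_succ']

theorem expT_add_of_mul_self_eq_zero {N : ℕ} (hfac : ∀ n < N, (n.factorial : F) ≠ 0)
    {x y : Λ} (hc : Commute x y) (hx : x * x = 0) (hy : y ^ (N - 1) = 0) :
    expT F N (x + y) = (1 + x) * expT F N y := by
  obtain _ | M := N
  · simp [expT]
  rw [Nat.add_sub_cancel] at hy
  have hshift : ∀ n ∈ range M,
      ((n + 1).factorial : F)⁻¹ • ((n + 1) • (x * y ^ n)) = x * ((n.factorial : F)⁻¹ • y ^ n) := by
    intro n hn
    have hn' : ((n + 1).factorial : F) ≠ 0 := hfac (n + 1) (by simpa using hn)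
    rw [Nat.factorial_succ, Nat.cast_mul] at hn'
    rw [mul_smul_comm, ← Nat.cast_smul_eq_nsmul F, smul_smul, Nat.factorial_succ, Nat.cast_mul,
      mul_inv, mul_right_comm, inv_mul_cancel₀ (left_ne_zero_of_mul hn'), one_mul]
  have hexp : ∀ z : Λ, expT F (M + 1) z =
      ∑ n ∈ range M, ((n + 1).factorial : F)⁻¹ • z ^ (n + 1) + 1 := by
    simp [expT, sum_range_succ']
  have hexp_y : expT F (M + 1) y = ∑ n ∈ range M, (n.factorial : F)⁻¹ • y ^ n := by
    simp [expT, sum_range_succ, hy]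
  rw [add_mul, one_mul]
  nth_rw 2 [hexp_y]
  rw [hexp, hexp y]
  simp only [add_pow_succ_of_mul_self_eq_zero hc hx, smul_add, sum_add_distrib, mul_sum]
  rw [sum_congr rfl hshift]
  abel

theorem expT_list_sum {N : ℕ} (hfac : ∀ n < N, (n.factorial : F) ≠ 0) {l : List Λ}
    (hl : l.Pairwise Commute) (hsq : ∀ x ∈ l, x * x = 0) (hN : l.length < N) :
    expT F N l.sum = (l.map (1 + ·)).prod := by
  induction l with
  | nil => exact expT_zero hN
  | cons x l ih =>
    rw [List.pairwise_cons] at hl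
    rw [List.forall_mem_cons] at hsq
    rw [List.length_cons] at hN
    have hnil : l.sum ^ (N - 1) = 0 :=
      pow_eq_zero_of_le (by omega) (list_sum_pow_length_succ_eq_zero hl.2 hsq.2)
    rw [List.sum_cons, expT_add_of_mul_self_eq_zero hfac (Commute.list_sum_right x l hl.1) hsq.1
      hnil, ih hl.2 hsq.2 (by omega), List.map_cons, List.prod_cons]

end TruncatedExp

section Berezin

open Submodule

variable {F : Type*} [Field F] {Λ : Type*} [Ring Λ] [Algebra F Λ] {ι : Type*} {e : ι → Λ}

theorem mem_notInvolving_of_ne {i j : ι} (h : j ≠ i) : e j ∈ notInvolving F e i :=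
  Algebra.subset_adjoin ⟨j, h, rfl⟩

theorem one_add_mul_mem_notInvolving {i j : ι} (h : j ≠ i) {u : Λ} (hu : u ∈ notInvolving F e i) :
    1 + e j * u ∈ notInvolving F e i :=
  add_mem (one_mem _) (mul_mem (mem_notInvolving_of_ne h) hu)

namespace IsBerezin

variable {i : ι} {B : Λ →ₗ[F] Λ}

theorem apply_add_mul (hB : IsBerezin F e i B) {g h : Λ} (hg : g ∈ notInvolving F e i)
    (hh : h ∈ notInvolving F e i) : B (g + h * e i) = h := by
  rw [map_add, hB.1 g hg, hB.2 h hh, zero_add]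

theorem apply_mul_one_add_mul (hB : IsBerezin F e i B) {P u M : Λ}
    (hu : e i * u = -(u * e i)) (hM : Commute (e i) M) (hP : P ∈ notInvolving F e i)
    (hu' : u ∈ notInvolving F e i) (hM' : M ∈ notInvolving F e i) :
    B (P * ((1 + e i * u) * M)) = -(P * u * M) := by
  have hsplit : P * ((1 + e i * u) * M) = P * M + -(P * u * M) * e i := by
    rw [add_mul, one_mul, mul_add, hu]
    simp only [neg_mul, mul_neg, mul_assoc, hM.eq]
  rw [hsplit, hB.apply_add_mul (mul_mem hP hM') (neg_mem (mul_mem (mul_mem hP hu') hM'))]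

theorem apply_apply_one_add_mul_one_add_mul (hanti : ∀ i j, e i * e j = -(e j * e i)) {j : ι}
    {B' : Λ →ₗ[F] Λ} (hB : IsBerezin F e i B) (hB' : IsBerezin F e j B') (hji : j ≠ i)
    {P u v Q : Λ} (hu : u ∈ span F (Set.range e)) (hv : v ∈ span F (Set.range e))
    (hQ : ∀ k, Commute (e k) Q) (hPi : P ∈ notInvolving F e i) (hPj : P ∈ notInvolving F e j)
    (hui : u ∈ notInvolving F e i) (huj : u ∈ notInvolving F e j)
    (hvi : v ∈ notInvolving F e i) (hvj : v ∈ notInvolving F e j)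
    (hQi : Q ∈ notInvolving F e i) (hQj : Q ∈ notInvolving F e j) :
    B' (B (P * ((1 + e i * u) * ((1 + e j * v) * Q)))) = P * (u * v) * Q := by
  have hgen : ∀ k, e k ∈ span F (Set.range e) := fun k => subset_span ⟨k, rfl⟩
  have hcomm : Commute (e i) ((1 + e j * v) * Q) :=
    ((Commute.one_right _).add_right (commute_mul_of_mem_span hanti (hgen i) (hgen j) hv)).mul_right
      (hQ i)
  rw [hB.apply_mul_one_add_mul (mul_eq_neg_mul_of_mem_span hanti (hgen i) hu) hcomm hPi hui
      (mul_mem (one_add_mul_mem_notInvolving hji hvi) hQi), ← neg_mul (P * u),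
    hB'.apply_mul_one_add_mul (mul_eq_neg_mul_of_mem_span hanti (hgen j) hv) (hQ j)
      (neg_mem (mul_mem hPj huj)) hvj hQj]
  simp only [neg_mul, neg_neg, mul_assoc]

end IsBerezin

end Berezin

theorem expT_list_sum_of_forall_eq_mul_of_mem_span {F : Type*} [Field F] {Λ : Type*} [Ring Λ]
    [Algebra F Λ] {ι : Type*} {e : ι → Λ} (hanti : ∀ i j, e i * e j = -(e j * e i))
    (hsq : ∀ i, e i * e i = 0) {N : ℕ} (hfac : ∀ n < N, (n.factorial : F) ≠ 0) {l : List Λ}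
    (hl : ∀ s ∈ l, ∃ x ∈ Submodule.span F (Set.range e), ∃ y ∈ Submodule.span F (Set.range e),
      s = x * y)
    (hN : l.length < N) : expT F N l.sum = (l.map (1 + ·)).prod := by
  refine expT_list_sum hfac (List.pairwise_of_forall_mem_list fun s hs t ht => ?_)
    (fun s hs => ?_) hN
  · obtain ⟨x, hx, y, hy, rfl⟩ := hl s hs
    obtain ⟨z, hz, w, hw, rfl⟩ := hl t ht
    exact ((commute_mul_of_mem_span hanti hz hx hy).symm.mul_right
      (commute_mul_of_mem_span hanti hw hx hy).symm)
  · obtain ⟨x, hx, y, hy, rfl⟩ := hl s hs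
    exact mul_mul_self_eq_zero_of_mem_span hanti hsq hx hy

section Tetrahedron

variable {F : Type*} [Field F] {Λ : Type*} [Ring Λ] [Algebra F Λ] (ζ : Fin 5 → F)
  {i₁ i₂ i₃ i₄ : Fin 5}

def phiForm₁ (a : Finset (Fin 5) → Λ) (i₁ i₂ i₃ i₄ : Fin 5) : Λ :=
  (ζ i₂ - ζ i₃) • a {i₁, i₂, i₃} - (ζ i₂ - ζ i₄) • a {i₁, i₂, i₄} + (ζ i₃ - ζ i₄) • a {i₁, i₃, i₄}

def phiForm₂ (a : Finset (Fin 5) → Λ) (i₁ i₂ i₃ i₄ : Fin 5) : Λ :=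
  ((ζ i₁ - ζ i₃) / (ζ i₃ - ζ i₄)) • a {i₁, i₂, i₃}
    - ((ζ i₁ - ζ i₄) / (ζ i₃ - ζ i₄)) • a {i₁, i₂, i₄} + a {i₂, i₃, i₄}

variable {ζ} {a : Finset (Fin 5) → Λ}

theorem phiForm₁_mem {p : Submodule F Λ} (ha : ∀ S, a S ∈ p) : phiForm₁ ζ a i₁ i₂ i₃ i₄ ∈ p :=
  add_mem (sub_mem (p.smul_mem _ (ha _)) (p.smul_mem _ (ha _))) (p.smul_mem _ (ha _))

theorem phiForm₂_mem {p : Submodule F Λ} (ha : ∀ S, a S ∈ p) : phiForm₂ ζ a i₁ i₂ i₃ i₄ ∈ p :=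
  add_mem (sub_mem (p.smul_mem _ (ha _)) (p.smul_mem _ (ha _))) (ha _)

theorem fw_mem {A : Subalgebra F Λ} (ha : ∀ S, a S ∈ A) : fw ζ a i₁ i₂ i₃ i₄ ∈ A := by
  unfold fw
  repeat first
    | apply add_mem | apply sub_mem | apply Subalgebra.smul_mem | apply mul_mem | apply ha

theorem phiForm₁_mul_phiForm₂ (ha : ∀ S T, a S * a T = -(a T * a S)) (ha₂ : ∀ S, a S * a S = 0)
    (hζ : ζ i₃ ≠ ζ i₄) :
    phiForm₁ ζ a i₁ i₂ i₃ i₄ * phiForm₂ ζ a i₁ i₂ i₃ i₄ = fw ζ a i₁ i₂ i₃ i₄ := by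
  have h₃₄ : ζ i₃ - ζ i₄ ≠ 0 := sub_ne_zero.mpr hζ
  simp only [phiForm₁, phiForm₂, fw, add_mul, sub_mul, mul_add, mul_sub, smul_mul_assoc,
    mul_smul_comm, ha₂, smul_zero]
  rw [ha {i₁, i₂, i₄} {i₁, i₂, i₃}, ha {i₁, i₃, i₄} {i₁, i₂, i₃}, ha {i₁, i₃, i₄} {i₁, i₂, i₄}]
  match_scalars <;> field_simp
  ring

end Tetrahedron

section PentagonRHS

open Submodule

variable {F : Type*} [Field F] {Λ : Type*} [Ring Λ] [Algebra F Λ] {β : Type*}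
  (ζ : Fin 5 → F) (e : Finset (Fin 5) ⊕ β → Λ) (b₁ b₂ : β) (i₁ i₂ i₃ i₄ : Fin 5)

def phiTerms : List Λ :=
  [e (.inr b₁) * phiForm₁ ζ (fun S => e (.inl S)) i₁ i₂ i₃ i₄,
    e (.inr b₂) * phiForm₂ ζ (fun S => e (.inl S)) i₁ i₂ i₃ i₄]

def gaussT : Λ :=
  (1 + e (.inr b₁) * phiForm₁ ζ (fun S => e (.inl S)) i₁ i₂ i₃ i₄) *
    (1 + e (.inr b₂) * phiForm₂ ζ (fun S => e (.inl S)) i₁ i₂ i₃ i₄)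

theorem PhiT_eq_sum_phiTerms :
    PhiT ζ e b₁ b₂ i₁ i₂ i₃ i₄ = (phiTerms ζ e b₁ b₂ i₁ i₂ i₃ i₄).sum := by
  simp [PhiT, phiTerms, phiForm₁, phiForm₂]

theorem prod_map_phiTerms :
    ((phiTerms ζ e b₁ b₂ i₁ i₂ i₃ i₄).map (1 + ·)).prod = gaussT ζ e b₁ b₂ i₁ i₂ i₃ i₄ := by
  simp [phiTerms, gaussT]

variable {ζ e b₁ b₂ i₁ i₂ i₃ i₄}

theorem inl_mem_span (S : Finset (Fin 5)) : e (.inl S) ∈ span F (Set.range e) :=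
  subset_span ⟨_, rfl⟩

theorem inl_mem_notInvolving (S : Finset (Fin 5)) (c : β) :
    e (.inl S) ∈ notInvolving F e (.inr c) :=
  mem_notInvolving_of_ne Sum.inl_ne_inr

theorem phiForm₁_mem_notInvolving (c : β) :
    phiForm₁ ζ (fun S => e (.inl S)) i₁ i₂ i₃ i₄ ∈ notInvolving F e (.inr c) :=
  phiForm₁_mem (p := (notInvolving F e _).toSubmodule) (inl_mem_notInvolving · c)

theorem phiForm₂_mem_notInvolving (c : β) :
    phiForm₂ ζ (fun S => e (.inl S)) i₁ i₂ i₃ i₄ ∈ notInvolving F e (.inr c) :=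
  phiForm₂_mem (p := (notInvolving F e _).toSubmodule) (inl_mem_notInvolving · c)

theorem fw_mem_notInvolving (c : β) :
    fw ζ (fun S => e (.inl S)) i₁ i₂ i₃ i₄ ∈ notInvolving F e (.inr c) :=
  fw_mem (inl_mem_notInvolving · c)

theorem exists_eq_mul_of_mem_phiTerms {s : Λ} (hs : s ∈ phiTerms ζ e b₁ b₂ i₁ i₂ i₃ i₄) :
    ∃ x ∈ span F (Set.range e), ∃ y ∈ span F (Set.range e), s = x * y := by
  simp only [phiTerms, List.mem_cons, List.not_mem_nil, or_false] at hs
  rcases hs with rfl | rfl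
  exacts [⟨_, subset_span ⟨_, rfl⟩, _, phiForm₁_mem inl_mem_span, rfl⟩,
    ⟨_, subset_span ⟨_, rfl⟩, _, phiForm₂_mem inl_mem_span, rfl⟩]

theorem commute_gaussT (hanti : ∀ i j, e i * e j = -(e j * e i)) (k : Finset (Fin 5) ⊕ β) :
    Commute (e k) (gaussT ζ e b₁ b₂ i₁ i₂ i₃ i₄) := by
  have hgen : ∀ k, e k ∈ span F (Set.range e) := fun k => subset_span ⟨k, rfl⟩
  exact ((Commute.one_right _).add_right
      (commute_mul_of_mem_span hanti (hgen k) (hgen _) (phiForm₁_mem inl_mem_span))).mul_right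
    ((Commute.one_right _).add_right
      (commute_mul_of_mem_span hanti (hgen k) (hgen _) (phiForm₂_mem inl_mem_span)))

theorem gaussT_mem_notInvolving {c : β} (h₁ : b₁ ≠ c) (h₂ : b₂ ≠ c) :
    gaussT ζ e b₁ b₂ i₁ i₂ i₃ i₄ ∈ notInvolving F e (.inr c) :=
  mul_mem (one_add_mul_mem_notInvolving (by simpa using h₁) (phiForm₁_mem_notInvolving c))
    (one_add_mul_mem_notInvolving (by simpa using h₂) (phiForm₂_mem_notInvolving c))

theorem IsBerezin.apply_apply_mul_gaussT_mul (hanti : ∀ i j, e i * e j = -(e j * e i))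
    (hsq : ∀ i, e i * e i = 0) {B B' : Λ →ₗ[F] Λ} (hB : IsBerezin F e (.inr b₁) B)
    (hB' : IsBerezin F e (.inr b₂) B') (hb : b₂ ≠ b₁) (hζ : ζ i₃ ≠ ζ i₄) {P Q : Λ}
    (hQ : ∀ k, Commute (e k) Q) (hP₁ : P ∈ notInvolving F e (.inr b₁))
    (hP₂ : P ∈ notInvolving F e (.inr b₂)) (hQ₁ : Q ∈ notInvolving F e (.inr b₁))
    (hQ₂ : Q ∈ notInvolving F e (.inr b₂)) :
    B' (B (P * (gaussT ζ e b₁ b₂ i₁ i₂ i₃ i₄ * Q))) =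
      P * fw ζ (fun S => e (.inl S)) i₁ i₂ i₃ i₄ * Q := by
  rw [gaussT, mul_assoc, hB.apply_apply_one_add_mul_one_add_mul hanti hB' (by simpa using hb)
    (phiForm₁_mem inl_mem_span) (phiForm₂_mem inl_mem_span) hQ hP₁ hP₂
    (phiForm₁_mem_notInvolving b₁) (phiForm₁_mem_notInvolving b₂)
    (phiForm₂_mem_notInvolving b₁) (phiForm₂_mem_notInvolving b₂) hQ₁ hQ₂,
    phiForm₁_mul_phiForm₂ (fun S T => hanti _ _) (fun S => hsq _) hζ]

end PentagonRHS

/-- `e (Sum.inr (t, k))` is the generator `b⁽ᵏ⁺¹⁾` of the tetrahedron `1245`, `1345`, `2345`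
for `t = 0, 1, 2`. -/
theorem gaussian_rhs_general
    {F : Type*} [Field F] {Λ : Type*} [Ring Λ] [Algebra F Λ]
    (ζ : Fin 5 → F)
    (hfac : ∀ n < 7, (n.factorial : F) ≠ 0)
    (h45 : ζ 3 ≠ ζ 4)
    (e : Finset (Fin 5) ⊕ (Fin 3 × Fin 2) → Λ)
    (hanti : ∀ i j, e i * e j = -(e j * e i))
    (hsq : ∀ i, e i * e i = 0)
    (B00 B01 B10 B11 B20 B21 : Λ →ₗ[F] Λ)
    (hB00 : IsBerezin F e (Sum.inr (0, 0)) B00)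
    (hB01 : IsBerezin F e (Sum.inr (0, 1)) B01)
    (hB10 : IsBerezin F e (Sum.inr (1, 0)) B10)
    (hB11 : IsBerezin F e (Sum.inr (1, 1)) B11)
    (hB20 : IsBerezin F e (Sum.inr (2, 0)) B20)
    (hB21 : IsBerezin F e (Sum.inr (2, 1)) B21) :
    B21 (B20 (B11 (B10 (B01 (B00 (expT F 7
        (PhiT ζ e (0, 0) (0, 1) 0 1 3 4 + PhiT ζ e (1, 0) (1, 1) 0 2 3 4 +
          PhiT ζ e (2, 0) (2, 1) 1 2 3 4))))))) =
      fw ζ (fun S => e (Sum.inl S)) 0 1 3 4 * fw ζ (fun S => e (Sum.inl S)) 0 2 3 4 *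
        fw ζ (fun S => e (Sum.inl S)) 1 2 3 4 := by
  rw [PhiT_eq_sum_phiTerms, PhiT_eq_sum_phiTerms, PhiT_eq_sum_phiTerms, ← List.sum_append,
    ← List.sum_append, expT_list_sum_of_forall_eq_mul_of_mem_span hanti hsq hfac
      (List.forall_mem_append.2 ⟨List.forall_mem_append.2 ⟨fun _ => exists_eq_mul_of_mem_phiTerms,
        fun _ => exists_eq_mul_of_mem_phiTerms⟩, fun _ => exists_eq_mul_of_mem_phiTerms⟩)
      (by simp [phiTerms]),
    List.map_append, List.map_append, List.prod_append, List.prod_append, prod_map_phiTerms,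
    prod_map_phiTerms, prod_map_phiTerms]
  rw [mul_assoc, ← one_mul (gaussT ζ e (0, 0) (0, 1) 0 1 3 4 * _),
    hB00.apply_apply_mul_gaussT_mul hanti hsq hB01 (by decide) h45, one_mul,
    hB10.apply_apply_mul_gaussT_mul hanti hsq hB11 (by decide) h45,
    ← mul_one (gaussT ζ e (2, 0) (2, 1) 1 2 3 4),
    hB20.apply_apply_mul_gaussT_mul hanti hsq hB21 (by decide) h45, mul_one]
  all_goals simp [mul_mem, gaussT_mem_notInvolving, fw_mem_notInvolving, commute_gaussT hanti,
    Commute.mul_right]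

/-- The right-hand-side integrand of the pentagon equation as a single Gaussian
exponential: the six-fold Berezin integral of `exp(Φ₁₂₄₅ + Φ₁₃₄₅ + Φ₂₃₄₅)` over
`b⁽¹⁾₁₂₄₅, b⁽²⁾₁₂₄₅, b⁽¹⁾₁₃₄₅, b⁽²⁾₁₃₄₅, b⁽¹⁾₂₃₄₅, b⁽²⁾₂₃₄₅` (in this order,
innermost first) equals `f₁₂₄₅ · f₁₃₄₅ · f₂₃₄₅`.  Here `e (Sum.inr (t, k))` is the
generator `b⁽ᵏ⁺¹⁾` of tetrahedron `1245`/`1345`/`2345` for `t = 0`/`1`/`2`.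
The exponential terminates: `(Φ₁₂₄₅ + Φ₁₃₄₅ + Φ₂₃₄₅) ^ 7 = 0`; for its Taylor
series the factorials `n!`, `n < 7`, must be invertible in `F`. -/
theorem gaussian_rhs
    {F : Type*} [Field F] {Λ : Type*} [Ring Λ] [Algebra F Λ]
    (hchar : (2 : F) ≠ 0)
    (ζ : Fin 5 → F)
    (hfac : ∀ n < 7, (n.factorial : F) ≠ 0)
    (h45 : ζ 3 ≠ ζ 4)
    (e : Finset (Fin 5) ⊕ (Fin 3 × Fin 2) → Λ)
    (hanti : ∀ i j, e i * e j = -(e j * e i))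
    (hsq : ∀ i, e i * e i = 0)
    (B00 B01 B10 B11 B20 B21 : Λ →ₗ[F] Λ)
    (hB00 : IsBerezin F e (Sum.inr (0, 0)) B00)
    (hB01 : IsBerezin F e (Sum.inr (0, 1)) B01)
    (hB10 : IsBerezin F e (Sum.inr (1, 0)) B10)
    (hB11 : IsBerezin F e (Sum.inr (1, 1)) B11)
    (hB20 : IsBerezin F e (Sum.inr (2, 0)) B20)
    (hB21 : IsBerezin F e (Sum.inr (2, 1)) B21) :
    B21 (B20 (B11 (B10 (B01 (B00 (expT F 7
        (PhiT ζ e (0, 0) (0, 1) 0 1 3 4 + PhiT ζ e (1, 0) (1, 1) 0 2 3 4 +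
          PhiT ζ e (2, 0) (2, 1) 1 2 3 4))))))) =
      fw ζ (fun S => e (Sum.inl S)) 0 1 3 4 * fw ζ (fun S => e (Sum.inl S)) 0 2 3 4 *
        fw ζ (fun S => e (Sum.inl S)) 1 2 3 4 :=
  gaussian_rhs_general ζ hfac h45 e hanti hsq B00 B01 B10 B11 B20 B21 hB00 hB01 hB10 hB11 hB20 hB21
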